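/- arXiv:1911.06912 — 2 statements merged into one kernel-verified Lean document; each statement's English description precedes it below -/
import Mathlib

section
/- Let $\tilde\rho_1$ be a probability distribution with full support on a finite set $\mathcal{J}$, let $Z: \mathcal{J} \to \mathbb{R}$, and let $\beta$ be any probability distribution on $\mathcal{J}$. Define $\tilde\rho(j) = \exp(\log\tilde\rho_1(j) - Z(j)) / \sum_{k \in \mathcal{J}} \exp(\log\tilde\rho_1(k) - Z(k))$. Then $-\log\left[\sum_{j\in\mathcal{J}} \exp(\log\tilde\rho_1(j) - Z(j))\right] = -H(\beta, \tilde\rho) + \sum_{j}\beta(j) Z(j) + H(\beta, \tilde\rho_1)$, where $H(p,q) = -\sum_j p(j)\log q(j)$ is the cross-entropy. -/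
theorem confidence_decomposition {J : Type*} [Fintype J] [Nonempty J]
    (ρ₁ : J → ℝ) (hρ₁ : ∀ j, 0 < ρ₁ j) (hρ₁1 : ∑ j, ρ₁ j = 1)
    (Z : J → ℝ) (β : J → ℝ) (hβ : ∀ j, 0 ≤ β j) (hβ1 : ∑ j, β j = 1)
    (ρ : J → ℝ)
    (hρ : ∀ j, ρ j = Real.exp (Real.log (ρ₁ j) - Z j) /
      ∑ k, Real.exp (Real.log (ρ₁ k) - Z k)) :
    -Real.log (∑ j, Real.exp (Real.log (ρ₁ j) - Z j)) =
      -(-∑ j, β j * Real.log (ρ j)) + (∑ j, β j * Z j) +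
        (-∑ j, β j * Real.log (ρ₁ j)) := by
  set S := ∑ k, Real.exp (Real.log (ρ₁ k) - Z k) with hS
  have hSpos : 0 < S := Finset.sum_pos (fun k _ => Real.exp_pos _) Finset.univ_nonempty
  have hlog : ∀ j, Real.log (ρ j) = Real.log (ρ₁ j) - Z j - Real.log S := by
    intro j
    rw [hρ j, Real.log_div (Real.exp_ne_zero _) (ne_of_gt hSpos), Real.log_exp]
  have hsum : ∑ j, β j * Real.log (ρ j)
      = ∑ j, β j * Real.log (ρ₁ j) - ∑ j, β j * Z j - Real.log S := by
    simp only [hlog, mul_sub]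
    rw [Finset.sum_sub_distrib, Finset.sum_sub_distrib, ← Finset.sum_mul, hβ1, one_mul]
  rw [hsum]; ring
end

section
/- Let $i$ be a fixed hypothesis and, for each alternate hypothesis $j \neq i$ and each time $n$, let $Z_n(j) = \sum_{m=1}^{n} \log(p_i^{u_m}(y_m)/p_j^{u_m}(y_m))$ be the total log-likelihood ratio along a trajectory $(u_1,y_1,\dots,u_n,y_n)$ with all $p_k^{u_m}(y_m) > 0$. Let $\rho_1$ be a fully supported prior on the finite hypothesis set $\mathcal{X}$ and let $\rho_{n+1}(k) \propto \rho_1(k)\prod_{m=1}^n p_k^{u_m}(y_m)$ be the Bayesian posterior. Then $\log\frac{\rho_{n+1}(i)}{1-\rho_{n+1}(i)} - \log\frac{\rho_1(i)}{1-\rho_1(i)} = -\log\left[\sum_{j\neq i} \exp\big(\log\tilde\rho_1(j) - Z_n(j)\big)\right]$, where $\tilde\rho_1(j) = \rho_1(j)/(1-\rho_1(i))$. -/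
theorem confidence_llr_identity {X : Type*} [Fintype X] [DecidableEq X]
    (hcard : 2 ≤ Fintype.card X) (i : X) (n : ℕ)
    (L : X → Fin n → ℝ) (hL : ∀ k m, 0 < L k m)
    (ρ₁ : X → ℝ) (hρ₁ : ∀ k, 0 < ρ₁ k) (hρ₁1 : ∑ k, ρ₁ k = 1)
    (Z : X → ℝ) (hZ : ∀ j, Z j = ∑ m, Real.log (L i m / L j m))
    (post : X → ℝ)
    (hpost : ∀ k, post k = (ρ₁ k * ∏ m, L k m) / ∑ k', ρ₁ k' * ∏ m, L k' m) :
    Real.log (post i / (1 - post i)) - Real.log (ρ₁ i / (1 - ρ₁ i)) =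
      -Real.log (∑ j ∈ Finset.univ.erase i,
        Real.exp (Real.log (ρ₁ j / (1 - ρ₁ i)) - Z j)) := by
  have : Nonempty X := Fintype.card_pos_iff.mp (by omega)
  set P : X → ℝ := fun k => ∏ m, L k m with hP
  have hPpos : ∀ k, 0 < P k := fun k => Finset.prod_pos fun m _ => hL k m
  set T : ℝ := ∑ k', ρ₁ k' * P k' with hT
  have hTpos : 0 < T :=
    Finset.sum_pos (fun k _ => mul_pos (hρ₁ k) (hPpos k)) Finset.univ_nonempty
  obtain ⟨j₀, hj₀⟩ := Fintype.exists_ne_of_one_lt_card (by omega) i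
  have hne : (Finset.univ.erase i).Nonempty :=
    ⟨j₀, Finset.mem_erase.mpr ⟨hj₀, Finset.mem_univ _⟩⟩
  have hsum1 : ρ₁ i + ∑ j ∈ Finset.univ.erase i, ρ₁ j = 1 := by
    rw [Finset.add_sum_erase _ _ (Finset.mem_univ i)]; exact hρ₁1
  have h1ρpos : 0 < 1 - ρ₁ i := by
    have := Finset.sum_pos (fun k (_ : k ∈ Finset.univ.erase i) => hρ₁ k) hne
    linarith
  set Q : ℝ := ∑ j ∈ Finset.univ.erase i, ρ₁ j * P j with hQ
  have hQpos : 0 < Q :=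
    Finset.sum_pos (fun k _ => mul_pos (hρ₁ k) (hPpos k)) hne
  have hTsplit : T = ρ₁ i * P i + Q := by
    exact (Finset.add_sum_erase _ (fun k => ρ₁ k * P k) (Finset.mem_univ i)).symm
  have hposti : post i = ρ₁ i * P i / T := hpost i
  have h1post : 1 - post i = Q / T := by
    rw [hposti]; field_simp; linarith [hTsplit]
  have hZ' : ∀ j, Z j = Real.log (P i) - Real.log (P j) := by
    intro j
    rw [hZ]
    simp only [Real.log_div (hL i _).ne' (hL j _).ne']
    rw [Finset.sum_sub_distrib,
      ← Real.log_prod (fun m _ => (hL i m).ne'),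
      ← Real.log_prod (fun m _ => (hL j m).ne')]
  have hsumexp : ∑ j ∈ Finset.univ.erase i,
      Real.exp (Real.log (ρ₁ j / (1 - ρ₁ i)) - Z j) = Q / ((1 - ρ₁ i) * P i) := by
    rw [hQ, Finset.sum_div]
    refine Finset.sum_congr rfl fun j hj => ?_
    have hj' : Real.log (ρ₁ j / (1 - ρ₁ i)) - Z j
        = Real.log (ρ₁ j * P j / ((1 - ρ₁ i) * P i)) := by
      rw [hZ' j, Real.log_div (hρ₁ j).ne' h1ρpos.ne',
        Real.log_div (mul_pos (hρ₁ j) (hPpos j)).ne' (mul_pos h1ρpos (hPpos i)).ne',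
        Real.log_mul (hρ₁ j).ne' (hPpos j).ne',
        Real.log_mul h1ρpos.ne' (hPpos i).ne']
      ring
    rw [hj', Real.exp_log (div_pos (mul_pos (hρ₁ j) (hPpos j)) (mul_pos h1ρpos (hPpos i)))]
  rw [hsumexp, h1post, hposti]
  have e1 : ρ₁ i * P i / T / (Q / T) = ρ₁ i * P i / Q := by
    field_simp
  rw [e1, Real.log_div (mul_pos (hρ₁ i) (hPpos i)).ne' hQpos.ne',
    Real.log_mul (hρ₁ i).ne' (hPpos i).ne',
    Real.log_div (hρ₁ i).ne' h1ρpos.ne',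
    Real.log_div hQpos.ne' (mul_pos h1ρpos (hPpos i)).ne',
    Real.log_mul h1ρpos.ne' (hPpos i).ne']
  ring
end
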